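/- Let n ≥ 2, p ≥ 2 and D ≥ 1 be integers. Then M_{p,D} = Σ_{(a,b) ∈ Q_{p,D} ∩ S} Ã_{a,b} in the group algebra, and M_{p,D} = 0 if and only if Q_{p,D} ∩ S is empty. -/

import Mathlib

open Finset

/-- The alternating sum `Ã(μ) = Σ_{σ ∈ S_n} sign(σ)·X^{σ·μ}` in the group
algebra `AddMonoidAlgebra ℤ (Fin n → ℤ)`, where `(σ·μ)_i = μ_{σ⁻¹(i)}`. -/
noncomputable def Atilde (n : ℕ) (μ : Fin n → ℤ) : AddMonoidAlgebra ℤ (Fin n → ℤ) :=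
  ∑ σ : Equiv.Perm (Fin n),
    (Equiv.Perm.sign σ : ℤ) • AddMonoidAlgebra.single (fun i => μ (σ⁻¹ i)) 1

/-- The staircase tuple `ρ̃ = (n−1, n−2, …, 1, 0)`. -/
def rhoT (n : ℕ) : Fin n → ℤ := fun i => (n : ℤ) - 1 - (i : ℤ)

/-- `Ã_{a,b} = Σ Ã(ρ̃ − a(e_u − e_v))` over ordered pairs `u ≠ v` with
`v − u = a − b` (the roots of `sl_n` of height `a − b`). -/
noncomputable def AtildeAB (n : ℕ) (a b : ℕ) : AddMonoidAlgebra ℤ (Fin n → ℤ) :=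
  ∑ uv : Fin n × Fin n,
    if uv.1 ≠ uv.2 ∧ ((uv.2 : ℤ) - (uv.1 : ℤ) = (a : ℤ) - (b : ℤ)) then
      Atilde n (rhoT n - (a : ℤ) • (Pi.single uv.1 1 - Pi.single uv.2 1))
    else 0

/-- `M_{p,D} = Σ Ã_{a,b}` over pairs `(a,b)` of positive integers with
`a·b = p·D` and `p ∣ b` (all such pairs lie in `[1, p·D]²`). -/
noncomputable def Mpd (n p D : ℕ) : AddMonoidAlgebra ℤ (Fin n → ℤ) :=
  ∑ ab ∈ (Finset.Icc 1 (p * D) ×ˢ Finset.Icc 1 (p * D)).filter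
      (fun ab => ab.1 * ab.2 = p * D ∧ p ∣ ab.2),
    AtildeAB n ab.1 ab.2


/-- The finite set `Q_{p,D} ∩ S` of pairs `(a,b)` of positive integers with
`a·b = p·D`, `p ∣ b`, `p ∤ a`, `0 < |a − b| < n` and `a + b > n` (all such
pairs lie in `[1, p·D]²`). -/
def QSfin (n p D : ℕ) : Finset (ℕ × ℕ) :=
  (Finset.Icc 1 (p * D) ×ˢ Finset.Icc 1 (p * D)).filter
    (fun ab => ab.1 * ab.2 = p * D ∧ p ∣ ab.2 ∧ ¬ p ∣ ab.1 ∧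
      0 < |(ab.1 : ℤ) - (ab.2 : ℤ)| ∧ |(ab.1 : ℤ) - (ab.2 : ℤ)| < (n : ℤ) ∧
      n < ab.1 + ab.2)

/-! Ã is alternating, and `Ã_{b,a} = −Ã_{a,b}` because `ρ̃ − b(e_u − e_v)` is the transposition
`(u v)` applied to `ρ̃ − a(e_v − e_u)`. So the pairs with `p ∣ a`, which are closed under
`(a, b) ↦ (b, a)`, cancel, and among the others `Ã_{a,b}` vanishes outside `S`: for
`|a − b| ≥ n` there is no pair `(u, v)` at all, and for `a + b ≤ n` every weight
`ρ̃ − a(e_u − e_v)` has a repeated entry. Conversely, for `(a, b) ∈ Q ∩ S` there are `u, v`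
for which `ρ̃ − a(e_u − e_v)` has one entry below `0` and one above `n − 1`. The value set of
such a weight determines `(a, b, u, v)` up to `(b, a, v, u)`, and `(b, a) ∉ Q` because `p ∤ a`,
so its monomial has coefficient `1` in `M_{p,D}`. -/

open Equiv Function

section Alternant

variable {n : ℕ}

lemma coeff_Atilde (μ ν : Fin n → ℤ) :
    (Atilde n μ).coeff ν =
      ∑ σ : Perm (Fin n), if (fun i => μ (σ⁻¹ i)) = ν then (σ.sign : ℤ) else 0 := by
  simp [Atilde, Finsupp.single_apply]

lemma Atilde_perm (μ : Fin n → ℤ) (τ : Perm (Fin n)) :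
    Atilde n (fun i => μ (τ⁻¹ i)) = (τ.sign : ℤ) • Atilde n μ := by
  rw [Atilde, Atilde, smul_sum]
  refine Fintype.sum_equiv (Equiv.mulRight τ) _ _ fun σ => ?_
  simp only [coe_mulRight, mul_inv_rev, Perm.mul_apply, Perm.sign_mul, Units.val_mul, smul_smul]
  rw [mul_left_comm, ← Units.val_mul τ.sign, Int.units_mul_self, Units.val_one, mul_one]

lemma Atilde_eq_zero_of_not_injective {μ : Fin n → ℤ} (h : ¬Injective μ) : Atilde n μ = 0 := by
  obtain ⟨i, j, hμ, hij⟩ := Function.not_injective_iff.1 h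
  have hswap : (fun k => μ ((swap i j)⁻¹ k)) = μ := by
    ext k
    simp only [swap_inv, swap_apply_def]
    split_ifs <;> simp_all
  have hneg := Atilde_perm μ (swap i j)
  rw [hswap, Perm.sign_swap hij, Units.val_neg, Units.val_one, neg_one_smul] at hneg
  ext ν
  have := congrArg (fun x => x.coeff ν) hneg
  simp only [AddMonoidAlgebra.coeff_neg, Finsupp.neg_apply] at this
  simp only [AddMonoidAlgebra.coeff_zero, Finsupp.zero_apply]
  omega

lemma coeff_Atilde_self {μ : Fin n → ℤ} (hμ : Injective μ) : (Atilde n μ).coeff μ = 1 := by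
  rw [coeff_Atilde, sum_eq_single 1]
  · simp
  · intro σ _ hσ
    rw [if_neg]
    refine fun h => hσ (Perm.ext fun i => ?_)
    simpa using (hμ (congrFun h (σ i))).symm
  · simp

lemma range_eq_of_coeff_Atilde_ne_zero {μ ν : Fin n → ℤ} (h : (Atilde n μ).coeff ν ≠ 0) :
    Set.range ν = Set.range μ := by
  rw [coeff_Atilde] at h
  obtain ⟨σ, -, hσ⟩ := exists_ne_zero_of_sum_ne_zero h
  rw [ite_ne_right_iff] at hσ
  rw [← hσ.1]
  exact EquivLike.range_comp μ σ⁻¹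

end Alternant

def shiftedRho (n a : ℕ) (u v : Fin n) : Fin n → ℤ :=
  rhoT n - (a : ℤ) • (Pi.single u 1 - Pi.single v 1)

lemma AtildeAB_eq_sum_shiftedRho (n a b : ℕ) : AtildeAB n a b = ∑ uv : Fin n × Fin n,
    if uv.1 ≠ uv.2 ∧ (uv.2 : ℤ) - uv.1 = a - b then Atilde n (shiftedRho n a uv.1 uv.2)
    else 0 := rfl

section ShiftedRho

variable {n a b : ℕ} {u v : Fin n}

lemma shiftedRho_apply (huv : u ≠ v) (i : Fin n) : shiftedRho n a u v i =
    if i = u then (n : ℤ) - 1 - u - a else if i = v then (n : ℤ) - 1 - v + a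
    else (n : ℤ) - 1 - i := by
  simp only [shiftedRho, rhoT, Pi.sub_apply, Pi.smul_apply, Pi.single_apply, smul_eq_mul]
  split_ifs <;> simp_all

lemma shiftedRho_apply_left (huv : u ≠ v) : shiftedRho n a u v u = (n : ℤ) - 1 - u - a := by
  simp [shiftedRho_apply huv]

lemma shiftedRho_apply_right (huv : u ≠ v) : shiftedRho n a u v v = (n : ℤ) - 1 - v + a := by
  simp [shiftedRho_apply huv, huv.symm]

lemma shiftedRho_apply_of_ne {i : Fin n} (hu : i ≠ u) (hv : i ≠ v) :
    shiftedRho n a u v i = (n : ℤ) - 1 - i := by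
  simp [shiftedRho, rhoT, hu, hv]

lemma shiftedRho_swap (huv : u ≠ v) (hd : (v : ℤ) - u = b - a) :
    shiftedRho n b u v = fun i => shiftedRho n a v u ((swap u v)⁻¹ i) := by
  ext i
  rw [swap_inv, shiftedRho_apply huv, shiftedRho_apply huv.symm]
  simp only [swap_apply_def]
  split_ifs <;> simp_all <;> omega

lemma corner_of_injective_shiftedRho (ha : 1 ≤ a) (hb : 1 ≤ b) (huv : u ≠ v)
    (hd : (v : ℤ) - u = a - b) (hinj : Injective (shiftedRho n a u v)) :
    n ≤ u + a ∧ v < a := by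
  have hw : ∀ w : Fin n, (w : ℕ) ≠ u → (w : ℕ) ≠ v →
      shiftedRho n a u v w = (n : ℤ) - 1 - w := fun w hwu hwv =>
    shiftedRho_apply_of_ne (fun h => hwu (h ▸ rfl)) (fun h => hwv (h ▸ rfl))
  refine ⟨not_lt.1 fun h => ?_, not_le.1 fun h => ?_⟩
  · have hne : (⟨u + a, h⟩ : Fin n) ≠ u := fun h' => by simp [Fin.ext_iff] at h'; omega
    refine hne (hinj ?_)
    rw [hw _ (by simp; omega) (by simp; omega), shiftedRho_apply_left huv]
    push_cast; ring
  · have hne : (⟨v - a, by omega⟩ : Fin n) ≠ v := fun h' => by simp [Fin.ext_iff] at h'; omega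
    refine hne (hinj ?_)
    rw [hw _ (by simp; omega) (by simp; omega), shiftedRho_apply_right huv]
    push_cast [h]; ring

lemma injective_shiftedRho (huv : u ≠ v) (hu : n ≤ u + a) (hv : v < a) :
    Injective (shiftedRho n a u v) := by
  intro i j hij
  rw [shiftedRho_apply huv, shiftedRho_apply huv] at hij
  have := i.isLt; have := j.isLt
  split_ifs at hij <;> simp_all [Fin.ext_iff] <;> omega

lemma exists_corner (hb : 1 ≤ b) (hab : a ≠ b) (hlt : |(a : ℤ) - b| < n)
    (hgt : n < a + b) :
    ∃ u v : Fin n, u ≠ v ∧ (v : ℤ) - u = a - b ∧ n ≤ u + a ∧ v < a := by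
  have h := abs_lt.1 hlt
  have hV : max (n - b) (a - b) < n := max_lt (by omega) (by omega)
  have hU : max (n - b) (a - b) + b - a < n := by omega
  refine ⟨⟨_, hU⟩, ⟨_, hV⟩, fun h' => ?_, ?_, ?_, ?_⟩ <;> simp [Fin.ext_iff] at * <;> omega

/- The entries `μ u < 0` and `μ v ≥ n` of `μ := shiftedRho n a u v` can only be matched by the
entries at `u'` and `v'`, which fixes `u' + a'` and `a' - v'`; and the values in `[0, n)` that `μ`
misses are `n - 1 - u` and `n - 1 - v`, which forces `{u', v'} = {u, v}`. -/
lemma eq_of_range_shiftedRho_eq {a' b' : ℕ} {u' v' : Fin n}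
    (huv : u ≠ v) (hd : (v : ℤ) - u = a - b) (hu : n ≤ u + a) (hv : v < a)
    (huv' : u' ≠ v') (hd' : (v' : ℤ) - u' = a' - b')
    (h : Set.range (shiftedRho n a' u' v') = Set.range (shiftedRho n a u v)) :
    (a', b', u', v') = (a, b, u, v) ∨ (a', b') = (b, a) := by
  have mem_range' (i : Fin n) : shiftedRho n a u v i ∈ Set.range (shiftedRho n a' u' v') :=
    h ▸ ⟨i, rfl⟩
  have hval := fun i => shiftedRho_apply (a := a') huv' i
  obtain ⟨j, hj⟩ := mem_range' u
  obtain ⟨k, hk⟩ := mem_range' v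
  rw [hval, shiftedRho_apply_left huv] at hj
  rw [hval, shiftedRho_apply_right huv] at hk
  have := j.isLt; have := k.isLt
  have huj : u' + a' = (u : ℕ) + a := by split_ifs at hj <;> omega
  have hvk : (a' : ℤ) - v' = a - v := by split_ifs at hk <;> omega
  have hmem (w : Fin n) (hw : w = u ∨ w = v) : w = u' ∨ w = v' := by
    by_contra! hne
    obtain ⟨i, hi⟩ : shiftedRho n a' u' v' w ∈ Set.range (shiftedRho n a u v) := h ▸ ⟨w, rfl⟩
    rw [shiftedRho_apply_of_ne hne.1 hne.2, shiftedRho_apply huv] at hi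
    have := i.isLt
    split_ifs at hi <;> rcases hw with rfl | rfl <;> omega
  clear hj hk hval
  rcases hmem u (.inl rfl) with rfl | rfl <;> rcases hmem v (.inr rfl) with rfl | rfl
  · exact absurd rfl huv
  · left; simp only [Prod.mk.injEq, and_true]; omega
  · right; simp only [Prod.mk.injEq]; omega
  · exact absurd rfl huv

end ShiftedRho

section AtildeAB

variable {n : ℕ}

lemma AtildeAB_swap (n a b : ℕ) : AtildeAB n b a = -AtildeAB n a b := by
  rw [AtildeAB_eq_sum_shiftedRho, AtildeAB_eq_sum_shiftedRho, Fintype.sum_prod_type,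
    Fintype.sum_prod_type, sum_comm, ← sum_neg_distrib]
  refine sum_congr rfl fun v _ => ?_
  rw [← sum_neg_distrib]
  refine sum_congr rfl fun u _ => ?_
  dsimp only
  split_ifs with h h' h'
  · rw [shiftedRho_swap h.1 h.2, Atilde_perm, Perm.sign_swap h.1, Units.val_neg, Units.val_one,
      neg_one_smul]
  · exact absurd ⟨h.1.symm, by omega⟩ h'
  · exact absurd ⟨h'.1.symm, by omega⟩ h
  · rw [neg_zero]

lemma AtildeAB_eq_zero_of_forall_ne {a b : ℕ}
    (h : ∀ u v : Fin n, u ≠ v → (v : ℤ) - u ≠ a - b) : AtildeAB n a b = 0 :=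
  sum_eq_zero fun _ _ => if_neg fun huv => h _ _ huv.1 huv.2

lemma AtildeAB_self (n a : ℕ) : AtildeAB n a a = 0 :=
  AtildeAB_eq_zero_of_forall_ne fun u v huv hd => huv (by omega)

lemma AtildeAB_eq_zero_of_le_abs {a b : ℕ} (h : n ≤ |(a : ℤ) - b|) : AtildeAB n a b = 0 :=
  AtildeAB_eq_zero_of_forall_ne fun u v _ hd => by
    have := u.isLt; have := v.isLt
    rcases abs_cases ((a : ℤ) - b) with ⟨_, _⟩ | ⟨_, _⟩ <;> omega

lemma AtildeAB_eq_zero_of_add_le {a b : ℕ} (ha : 1 ≤ a) (hb : 1 ≤ b) (h : a + b ≤ n) :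
    AtildeAB n a b = 0 :=
  sum_eq_zero fun uv _ => by
    split_ifs with huv
    · refine Atilde_eq_zero_of_not_injective fun hinj => ?_
      have := corner_of_injective_shiftedRho ha hb huv.1 huv.2 hinj
      omega
    · rfl

lemma AtildeAB_eq_zero_of_not_mem {a b : ℕ} (ha : 1 ≤ a) (hb : 1 ≤ b)
    (h : ¬(0 < |(a : ℤ) - b| ∧ |(a : ℤ) - b| < n ∧ n < a + b)) : AtildeAB n a b = 0 := by
  simp only [abs_pos, sub_ne_zero, ne_eq, Nat.cast_inj, not_and_or, not_lt, not_not] at h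
  rcases h with rfl | h | h
  exacts [AtildeAB_self n a, AtildeAB_eq_zero_of_le_abs h, AtildeAB_eq_zero_of_add_le ha hb h]

end AtildeAB

lemma Finset.sum_eq_zero_of_antisymm {α M : Type*} [AddCommGroup M] {s : Finset (α × α)}
    {f : α → α → M} (hs : ∀ x ∈ s, x.swap ∈ s) (hf : ∀ a b, f b a = -f a b)
    (hdiag : ∀ a, f a a = 0) : ∑ x ∈ s, f x.1 x.2 = 0 :=
  sum_involution (fun x _ => x.swap)
    (fun x _ => by rw [Prod.fst_swap, Prod.snd_swap, hf, neg_add_cancel])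
    (fun x _ hx hswap => hx (by rw [← Prod.fst_swap, hswap, hdiag]))
    (fun x hx => hs x hx) (fun x _ => x.swap_swap)

lemma Mpd_eq_sum_QSfin (n p D : ℕ) : Mpd n p D = ∑ ab ∈ QSfin n p D, AtildeAB n ab.1 ab.2 := by
  set T := (Icc 1 (p * D) ×ˢ Icc 1 (p * D)).filter
    (fun ab => ab.1 * ab.2 = p * D ∧ p ∣ ab.2)
  have hcancel : ∑ ab ∈ T with p ∣ ab.1, AtildeAB n ab.1 ab.2 = 0 :=
    sum_eq_zero_of_antisymm (fun ab hab => by simp_all [T, mul_comm]) (AtildeAB_swap n)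
      (AtildeAB_self n)
  have hrest : ∑ ab ∈ T with ¬p ∣ ab.1, AtildeAB n ab.1 ab.2 =
      ∑ ab ∈ QSfin n p D, AtildeAB n ab.1 ab.2 := by
    rw [← sum_filter_of_ne (p := fun ab : ℕ × ℕ => 0 < |(ab.1 : ℤ) - ab.2| ∧
      |(ab.1 : ℤ) - ab.2| < n ∧ n < ab.1 + ab.2)]
    · congr 1
      ext ab
      simp only [T, QSfin, mem_filter]
      tauto
    · intro ab hab hne
      by_contra hS
      simp only [T, mem_filter, mem_product, mem_Icc] at hab
      exact hne (AtildeAB_eq_zero_of_not_mem hab.1.1.1.1 hab.1.1.2.1 hS)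
  rw [Mpd, ← sum_filter_add_sum_filter_not T (fun ab => p ∣ ab.1), hcancel, hrest,
    zero_add]

lemma sum_AtildeAB_ne_zero {n a b : ℕ} {s : Finset (ℕ × ℕ)} (hab : (a, b) ∈ s) (hba : (b, a) ∉ s)
    (hb : 1 ≤ b) (hlt : |(a : ℤ) - b| < n) (hgt : n < a + b) :
    ∑ x ∈ s, AtildeAB n x.1 x.2 ≠ 0 := by
  obtain ⟨u, v, huv, hd, hu, hv⟩ :=
    exists_corner hb (fun h => hba (h ▸ h ▸ hab)) hlt hgt
  set μ := shiftedRho n a u v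
  have honly : ∀ x ∈ s ×ˢ univ, (x.2.1 ≠ x.2.2 ∧ (x.2.2 : ℤ) - x.2.1 = x.1.1 - x.1.2) →
      (Atilde n (shiftedRho n x.1.1 x.2.1 x.2.2)).coeff μ ≠ 0 → x = ((a, b), (u, v)) := by
    rintro ⟨⟨a', b'⟩, ⟨u', v'⟩⟩ hx ⟨huv', hd'⟩ hcoeff
    rcases eq_of_range_shiftedRho_eq huv hd hu hv huv' hd'
      (range_eq_of_coeff_Atilde_ne_zero hcoeff).symm with h | h
    · simp_all
    · simp only [Prod.mk.injEq] at h
      obtain ⟨rfl, rfl⟩ := h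
      exact absurd (mem_product.1 hx).1 hba
  have hcoeff : (∑ x ∈ s, AtildeAB n x.1 x.2).coeff μ = 1 := by
    simp only [AtildeAB_eq_sum_shiftedRho, AddMonoidAlgebra.coeff_sum, Finsupp.finsetSum_apply,
      ← sum_product', apply_ite (fun x => AddMonoidAlgebra.coeff x μ),
      AddMonoidAlgebra.coeff_zero, Finsupp.zero_apply]
    rw [sum_eq_single_of_mem ((a, b), (u, v)) (by simp [hab])]
    · rw [if_pos ⟨huv, hd⟩, coeff_Atilde_self (injective_shiftedRho huv hu hv)]
    · intro x hx hne
      split_ifs with hc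
      · by_contra h
        exact hne (honly x hx hc h)
      · rfl
  intro h
  simp [h] at hcoeff

theorem stmt11_general (n p D : ℕ) :
    (Mpd n p D = ∑ ab ∈ QSfin n p D, AtildeAB n ab.1 ab.2) ∧
    (Mpd n p D = 0 ↔ QSfin n p D = ∅) := by
  refine ⟨Mpd_eq_sum_QSfin n p D, ?_⟩
  rw [Mpd_eq_sum_QSfin, ← not_nonempty_iff_eq_empty]
  refine ⟨fun h ⟨⟨a, b⟩, hab⟩ => ?_, fun h => by rw [not_nonempty_iff_eq_empty.1 h, sum_empty]⟩
  have hba : (b, a) ∉ QSfin n p D := fun hba => by simp_all [QSfin]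
  obtain ⟨⟨-, hb, -⟩, -, -, -, -, hlt, hgt⟩ := by
    simpa only [QSfin, mem_filter, mem_product, mem_Icc] using hab
  exact sum_AtildeAB_ne_zero hab hba hb hlt hgt h

/-- Lemma 4.6 of the paper.
For `n ≥ 2`, `p ≥ 2`, `D ≥ 1`: `M_{p,D} = Σ_{(a,b) ∈ Q_{p,D} ∩ S} Ã_{a,b}`, and
`M_{p,D} = 0` if and only if `Q_{p,D} ∩ S` is empty. -/
theorem stmt11 (n p D : ℕ) (hn : 2 ≤ n) (hp : 2 ≤ p) (hD : 1 ≤ D) :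
    (Mpd n p D = ∑ ab ∈ QSfin n p D, AtildeAB n ab.1 ab.2) ∧
    (Mpd n p D = 0 ↔ QSfin n p D = ∅) :=
  stmt11_general n p D
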